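/- arXiv:1309.5461 — 2 statements merged into one kernel-verified Lean document; each statement's English description precedes it below -/
import Mathlib

section
/- In the construction of the previous reduction (graph G' obtained from G by adding a k-clique {u₁,…,u_k} with u₁,…,u_{k−1} joined to all of V), every k-tuple dominating set of G' contains all of the vertices u₁,…,u_k. -/
def closedNbr {V : Type*} (G : SimpleGraph V) (v : V) : Set V :=
  insert v (G.neighborSet v)

def IsKTupleDomSet {V : Type*} (G : SimpleGraph V) (k : ℕ) (D : Set V) : Prop :=
  ∀ v : V, k ≤ (closedNbr G v ∩ D).ncard

def kTupleReduction {V : Type*} (G : SimpleGraph V) (k : ℕ) :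
    SimpleGraph (V ⊕ Fin k) where
  Adj x y :=
    match x, y with
    | .inl a, .inl b => G.Adj a b
    | .inl _, .inr i => (i : ℕ) < k - 1
    | .inr i, .inl _ => (i : ℕ) < k - 1
    | .inr i, .inr j => i ≠ j
  symm := by
    constructor
    rintro (a | i) (b | j) h
    · exact h.symm
    · exact h
    · exact h
    · exact h.symm
  loopless := by
    constructor
    rintro (a | i) h
    · exact G.ne_of_adj h rfl
    · exact h rfl

theorem kTuple_reduction_contains_clique {V : Type*} [Fintype V]
    (G : SimpleGraph V) (k : ℕ) (D' : Set (V ⊕ Fin k))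
    (hD' : IsKTupleDomSet (kTupleReduction G k) k D') :
    ∀ i : Fin k, Sum.inr i ∈ D' := by
  intro i
  have hk : 0 < k := i.pos
  set last : Fin k := ⟨k - 1, Nat.sub_lt hk one_pos⟩ with hlast
  set S : Set (V ⊕ Fin k) := Set.range (Sum.inr : Fin k → V ⊕ Fin k) with hS
  have hSncard : S.ncard = k := by
    rw [hS, ← Nat.card_coe_set_eq, Nat.card_range_of_injective Sum.inr_injective,
      Nat.card_eq_fintype_card, Fintype.card_fin]
  set T : Set (V ⊕ Fin k) := closedNbr (kTupleReduction G k) (Sum.inr last) ∩ D' with hT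
  have hTS : T ⊆ S := by
    rintro x ⟨hx, -⟩
    rcases hx with hx | hx
    · exact ⟨last, hx.symm⟩
    · rcases x with a | j
      · exact absurd hx (by simp [kTupleReduction, SimpleGraph.neighborSet]; show k ≤ k - 1 + 1; omega)
      · exact ⟨j, rfl⟩
  have hTk : k ≤ T.ncard := hD' (Sum.inr last)
  have hfin : S.Finite := Set.finite_range _
  have hTeq : T = S := Set.eq_of_subset_of_ncard_le hTS (by rw [hSncard]; exact hTk) hfin
  have hiS : Sum.inr i ∈ S := ⟨i, rfl⟩
  rw [← hTeq] at hiS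
  exact hiS.2
end

section
/- Let G = (V,E) be a finite simple graph with V = {v₁,…,v_n}, and let G' be obtained by attaching to each v_i a pendant path v_i–x_i–y_i–z_i. Then G has a dominating set of cardinality at most p if and only if G' has a liar's dominating set of cardinality at most p + 3n. -/
def IsLiarDomSet {V : Type*} (G : SimpleGraph V) (D : Set V) : Prop :=
  (∀ v : V, 2 ≤ (closedNbr G v ∩ D).ncard) ∧
  (∀ u v : V, u ≠ v → 3 ≤ ((closedNbr G u ∪ closedNbr G v) ∩ D).ncard)

/-- The graph `G'` obtained from `G` by attaching to each vertex `v` a pendant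
path `v – xᵥ – yᵥ – zᵥ`, where `xᵥ = (v,0)`, `yᵥ = (v,1)`, `zᵥ = (v,2)`. -/
def pendantPaths {V : Type*} (G : SimpleGraph V) : SimpleGraph (V ⊕ V × Fin 3) where
  Adj x y :=
    match x, y with
    | .inl a, .inl b => G.Adj a b
    | .inl a, .inr (b, i) => a = b ∧ i = 0
    | .inr (a, i), .inl b => a = b ∧ i = 0
    | .inr (a, i), .inr (b, j) => a = b ∧ ((i : ℕ) + 1 = (j : ℕ) ∨ (j : ℕ) + 1 = (i : ℕ))
  symm := by
    constructor
    rintro (a | ⟨a, i⟩) (b | ⟨b, j⟩) h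
    · exact h.symm
    · exact ⟨h.1.symm, h.2⟩
    · exact ⟨h.1.symm, h.2⟩
    · exact ⟨h.1.symm, h.2.symm⟩
  loopless := by
    constructor
    rintro (a | ⟨a, i⟩) h
    · exact G.irrefl h
    · omega
  -- note: in the last case `h : a = a ∧ (i+1 = i ∨ i+1 = i)`

def IsDomSet {V : Type*} (G : SimpleGraph V) (D : Set V) : Prop :=
  ∀ v : V, 1 ≤ (closedNbr G v ∩ D).ncard

section helpers
variable {V : Type*} (G : SimpleGraph V) (v : V)

lemma cn_inr2 : closedNbr (pendantPaths G) (Sum.inr (v, 2)) =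
    {Sum.inr (v, 1), Sum.inr (v, 2)} := by
  ext x
  rcases x with a | ⟨a, i⟩
  · simp [closedNbr, pendantPaths, SimpleGraph.mem_neighborSet, Prod.ext_iff, eq_comm]
  · fin_cases i <;>
      simp [closedNbr, pendantPaths, SimpleGraph.mem_neighborSet, Prod.ext_iff, eq_comm]

lemma cn_inr1 : closedNbr (pendantPaths G) (Sum.inr (v, 1)) =
    {Sum.inr (v, 0), Sum.inr (v, 1), Sum.inr (v, 2)} := by
  ext x
  rcases x with a | ⟨a, i⟩
  · simp [closedNbr, pendantPaths, SimpleGraph.mem_neighborSet, Prod.ext_iff, eq_comm]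
  · fin_cases i <;>
      simp [closedNbr, pendantPaths, SimpleGraph.mem_neighborSet, Prod.ext_iff, eq_comm]

lemma cn_inr0 : closedNbr (pendantPaths G) (Sum.inr (v, 0)) =
    {Sum.inl v, Sum.inr (v, 0), Sum.inr (v, 1)} := by
  ext x
  rcases x with a | ⟨a, i⟩
  · simp [closedNbr, pendantPaths, SimpleGraph.mem_neighborSet, Prod.ext_iff, eq_comm]
  · fin_cases i <;>
      simp [closedNbr, pendantPaths, SimpleGraph.mem_neighborSet, Prod.ext_iff, eq_comm]

lemma cn_inl : closedNbr (pendantPaths G) (Sum.inl v) =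
    Sum.inl '' closedNbr G v ∪ {Sum.inr (v, 0)} := by
  ext x
  rcases x with a | ⟨a, i⟩
  · simp [closedNbr, pendantPaths, SimpleGraph.mem_neighborSet, Prod.ext_iff, eq_comm]
  · fin_cases i <;>
      simp [closedNbr, pendantPaths, SimpleGraph.mem_neighborSet, Prod.ext_iff, eq_comm]

lemma two_le_ncard {α : Type*} {S : Set α} (hS : S.Finite) {a b : α}
    (ha : a ∈ S) (hb : b ∈ S) (hab : a ≠ b) : 2 ≤ S.ncard := by
  calc 2 = ({a, b} : Set α).ncard := (Set.ncard_pair hab).symm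
    _ ≤ S.ncard := Set.ncard_le_ncard (by simp [Set.insert_subset_iff, ha, hb]) hS

lemma three_le_ncard {α : Type*} {S : Set α} (hS : S.Finite) {a b c : α}
    (ha : a ∈ S) (hb : b ∈ S) (hc : c ∈ S)
    (hab : a ≠ b) (hac : a ≠ c) (hbc : b ≠ c) : 3 ≤ S.ncard := by
  have h3 : ({a, b, c} : Set α).ncard = 3 := by
    rw [Set.ncard_insert_of_notMem (by simp [hab, hac])
      ((Set.finite_singleton c).insert b), Set.ncard_pair hbc]
  calc 3 = ({a, b, c} : Set α).ncard := h3.symm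
    _ ≤ S.ncard := Set.ncard_le_ncard (by simp [Set.insert_subset_iff, ha, hb, hc]) hS

end helpers

theorem pendant_paths_reduction_correct {V : Type*} [Fintype V] [DecidableEq V]
    (G : SimpleGraph V) (p : ℕ) :
    (∃ D : Set V, IsDomSet G D ∧ D.ncard ≤ p) ↔
      (∃ D' : Set (V ⊕ V × Fin 3),
        IsLiarDomSet (pendantPaths G) D' ∧ D'.ncard ≤ p + 3 * Fintype.card V) := by
  have hbig : ∀ (D : Set V),
      (Sum.inl '' D ∪ Set.range Sum.inr : Set (V ⊕ V × Fin 3)).ncard =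
        D.ncard + 3 * Fintype.card V := by
    intro D
    have hdisj : Disjoint (Sum.inl '' D) (Set.range (Sum.inr : V × Fin 3 → V ⊕ V × Fin 3)) := by
      rw [Set.disjoint_left]
      rintro x ⟨a, -, rfl⟩ ⟨y, h⟩
      exact Sum.inl_ne_inr h.symm
    rw [Set.ncard_union_eq hdisj (Set.toFinite _) (Set.toFinite _),
      Set.ncard_image_of_injective _ Sum.inl_injective]
    congr 1
    rw [← Set.image_univ, Set.ncard_image_of_injective _ Sum.inr_injective,
      Set.ncard_univ, Nat.card_eq_fintype_card, Fintype.card_prod, Fintype.card_fin,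
      mul_comm]
  constructor
  · rintro ⟨D, hD, hcard⟩
    have hne : ∀ v, ∃ d, d ∈ closedNbr G v ∩ D := fun v =>
      Set.nonempty_of_ncard_ne_zero (by have := hD v; omega)
    choose d hd using hne
    refine ⟨Sum.inl '' D ∪ Set.range Sum.inr, ⟨?_, ?_⟩, ?_⟩
    · -- condition (i)
      rintro (a | ⟨a, i⟩)
      · refine two_le_ncard (Set.toFinite _) (a := Sum.inl (d a)) (b := Sum.inr (a, 0))
          ⟨?_, ?_⟩ ⟨?_, ?_⟩ (by simp)
        · rw [cn_inl]; exact Or.inl ⟨d a, (hd a).1, rfl⟩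
        · exact Or.inl ⟨d a, (hd a).2, rfl⟩
        · rw [cn_inl]; exact Or.inr rfl
        · exact Or.inr ⟨(a, 0), rfl⟩
      · fin_cases i
        · exact two_le_ncard (Set.toFinite _) (a := Sum.inr (a, 0)) (b := Sum.inr (a, 1))
            ⟨by simp [cn_inr0], Or.inr ⟨_, rfl⟩⟩ ⟨by simp [cn_inr0], Or.inr ⟨_, rfl⟩⟩ (by simp)
        · exact two_le_ncard (Set.toFinite _) (a := Sum.inr (a, 0)) (b := Sum.inr (a, 1))
            ⟨by simp [cn_inr1], Or.inr ⟨_, rfl⟩⟩ ⟨by simp [cn_inr1], Or.inr ⟨_, rfl⟩⟩ (by simp)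
        · exact two_le_ncard (Set.toFinite _) (a := Sum.inr (a, 1)) (b := Sum.inr (a, 2))
            ⟨by simp [cn_inr2], Or.inr ⟨_, rfl⟩⟩ ⟨by simp [cn_inr2], Or.inr ⟨_, rfl⟩⟩ (by simp)
    · -- condition (ii)
      rintro (a | ⟨a, i⟩) (b | ⟨b, j⟩) hne2
      · -- inl a, inl b with a ≠ b
        have hab : a ≠ b := fun h => hne2 (by rw [h])
        refine three_le_ncard (Set.toFinite _) (a := Sum.inl (d a)) (b := Sum.inr (a, 0))
          (c := Sum.inr (b, 0))
          ⟨Or.inl ?_, Or.inl ⟨d a, (hd a).2, rfl⟩⟩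
          ⟨Or.inl ?_, Or.inr ⟨_, rfl⟩⟩ ⟨Or.inr ?_, Or.inr ⟨_, rfl⟩⟩
          (by simp) (by simp) (by simp [hab])
        · rw [cn_inl]; exact Or.inl ⟨d a, (hd a).1, rfl⟩
        · rw [cn_inl]; exact Or.inr rfl
        · rw [cn_inl]; exact Or.inr rfl
      · -- inl a, inr (b, j): use inl (d a), inr (a,0), inr (b,1)
        refine three_le_ncard (Set.toFinite _) (a := Sum.inl (d a)) (b := Sum.inr (a, 0))
          (c := Sum.inr (b, 1))
          ⟨Or.inl ?_, Or.inl ⟨d a, (hd a).2, rfl⟩⟩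
          ⟨Or.inl ?_, Or.inr ⟨_, rfl⟩⟩ ⟨Or.inr ?_, Or.inr ⟨_, rfl⟩⟩
          (by simp) (by simp) (by simp)
        · rw [cn_inl]; exact Or.inl ⟨d a, (hd a).1, rfl⟩
        · rw [cn_inl]; exact Or.inr rfl
        · fin_cases j <;> simp [cn_inr0, cn_inr1, cn_inr2]
      · -- inr (a, i), inl b
        refine three_le_ncard (Set.toFinite _) (a := Sum.inl (d b)) (b := Sum.inr (b, 0))
          (c := Sum.inr (a, 1))
          ⟨Or.inr ?_, Or.inl ⟨d b, (hd b).2, rfl⟩⟩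
          ⟨Or.inr ?_, Or.inr ⟨_, rfl⟩⟩ ⟨Or.inl ?_, Or.inr ⟨_, rfl⟩⟩
          (by simp) (by simp) (by simp)
        · rw [cn_inl]; exact Or.inl ⟨d b, (hd b).1, rfl⟩
        · rw [cn_inl]; exact Or.inr rfl
        · fin_cases i <;> simp [cn_inr0, cn_inr1, cn_inr2]
      · -- inr (a, i), inr (b, j)
        rcases eq_or_ne a b with rfl | hab
        · have hij : i ≠ j := fun h => hne2 (by rw [h])
          refine three_le_ncard (Set.toFinite _) (a := Sum.inr (a, 0)) (b := Sum.inr (a, 1))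
            (c := Sum.inr (a, 2))
            ⟨?_, Or.inr ⟨_, rfl⟩⟩ ⟨?_, Or.inr ⟨_, rfl⟩⟩ ⟨?_, Or.inr ⟨_, rfl⟩⟩
            (by simp) (by simp) (by simp) <;>
            fin_cases i <;> fin_cases j <;>
            simp_all [cn_inr0, cn_inr1, cn_inr2]
        · refine three_le_ncard (Set.toFinite _)
            (a := Sum.inr (a, if i = 2 then 2 else 0)) (b := Sum.inr (a, 1))
            (c := Sum.inr (b, 1))
            ⟨Or.inl ?_, Or.inr ⟨_, rfl⟩⟩ ⟨Or.inl ?_, Or.inr ⟨_, rfl⟩⟩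
            ⟨Or.inr ?_, Or.inr ⟨_, rfl⟩⟩
            (by split_ifs <;> simp) (by simp [hab]) (by simp [hab])
          · fin_cases i <;> simp [cn_inr0, cn_inr1, cn_inr2]
          · fin_cases i <;> simp [cn_inr0, cn_inr1, cn_inr2]
          · fin_cases j <;> simp [cn_inr0, cn_inr1, cn_inr2]
    · rw [hbig]; omega
  · rintro ⟨D', ⟨h1, h2⟩, hcard⟩
    -- all pendant vertices are in D'
    have hyz : ∀ v : V, Sum.inr (v, 1) ∈ D' ∧ Sum.inr (v, 2) ∈ D' := by
      intro v
      have h := h1 (Sum.inr (v, 2))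
      rw [cn_inr2] at h
      have heq : ({Sum.inr (v, 1), Sum.inr (v, 2)} : Set (V ⊕ V × Fin 3)) ∩ D' =
          {Sum.inr (v, 1), Sum.inr (v, 2)} :=
        Set.eq_of_subset_of_ncard_le Set.inter_subset_left
          (by rw [Set.ncard_pair (by simp)]; exact h) (Set.toFinite _)
      have hsub : ({Sum.inr (v, 1), Sum.inr (v, 2)} : Set (V ⊕ V × Fin 3)) ⊆ D' := by
        rw [← heq]; exact Set.inter_subset_right
      exact ⟨hsub (Or.inl rfl), hsub (Or.inr rfl)⟩
    have hx : ∀ v : V, Sum.inr (v, 0) ∈ D' := by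
      intro v
      have h := h2 (Sum.inr (v, 1)) (Sum.inr (v, 2)) (by simp)
      rw [cn_inr1, cn_inr2] at h
      have hu : ({Sum.inr (v,0), Sum.inr (v,1), Sum.inr (v,2)} : Set (V ⊕ V × Fin 3)) ∪
          {Sum.inr (v,1), Sum.inr (v,2)} = {Sum.inr (v,0), Sum.inr (v,1), Sum.inr (v,2)} := by
        ext x; simp only [Set.mem_union, Set.mem_insert_iff, Set.mem_singleton_iff]; tauto
      rw [hu] at h
      have heq : ({Sum.inr (v,0), Sum.inr (v,1), Sum.inr (v,2)} : Set (V ⊕ V × Fin 3)) ∩ D' =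
          {Sum.inr (v,0), Sum.inr (v,1), Sum.inr (v,2)} :=
        Set.eq_of_subset_of_ncard_le Set.inter_subset_left
          (by
            rw [Set.ncard_insert_of_notMem (by simp)
              ((Set.finite_singleton _).insert _), Set.ncard_pair (by simp)]
            exact h) (Set.toFinite _)
      have hsub : ({Sum.inr (v,0), Sum.inr (v,1), Sum.inr (v,2)} : Set (V ⊕ V × Fin 3)) ⊆ D' := by
        rw [← heq]; exact Set.inter_subset_right
      exact hsub (Or.inl rfl)
    have hall : Set.range (Sum.inr : V × Fin 3 → V ⊕ V × Fin 3) ⊆ D' := by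
      rintro x ⟨⟨v, i⟩, rfl⟩
      fin_cases i
      · exact hx v
      · exact (hyz v).1
      · exact (hyz v).2
    refine ⟨{a | Sum.inl a ∈ D'}, ?_, ?_⟩
    · intro v
      have h := h1 (Sum.inl v)
      rw [cn_inl, Set.union_inter_distrib_right] at h
      have hle : (({Sum.inr (v, 0)} : Set (V ⊕ V × Fin 3)) ∩ D').ncard ≤ 1 := by
        calc (({Sum.inr (v, 0)} : Set (V ⊕ V × Fin 3)) ∩ D').ncard ≤
            ({Sum.inr (v, 0)} : Set (V ⊕ V × Fin 3)).ncard :=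
              Set.ncard_le_ncard Set.inter_subset_left (Set.toFinite _)
          _ = 1 := Set.ncard_singleton _
      have h' := Set.ncard_union_le (Sum.inl '' closedNbr G v ∩ D')
        (({Sum.inr (v, 0)} : Set (V ⊕ V × Fin 3)) ∩ D')
      have hpos : 1 ≤ (Sum.inl '' closedNbr G v ∩ D').ncard := by omega
      obtain ⟨x, hx1, hx2⟩ := Set.nonempty_of_ncard_ne_zero (by omega :
        (Sum.inl '' closedNbr G v ∩ D').ncard ≠ 0)
      obtain ⟨a, ha, rfl⟩ := hx1
      have : a ∈ closedNbr G v ∩ {a | Sum.inl a ∈ D'} := ⟨ha, hx2⟩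
      have hne' : (closedNbr G v ∩ {a | Sum.inl a ∈ D'}).Nonempty := ⟨a, this⟩
      have := Set.ncard_pos (Set.toFinite _) |>.mpr hne'
      omega
    · have hsub : Sum.inl '' {a | Sum.inl a ∈ D'} ∪ Set.range Sum.inr ⊆ D' := by
        rintro x (⟨a, ha, rfl⟩ | hxr)
        · exact ha
        · exact hall hxr
      have := Set.ncard_le_ncard hsub (Set.toFinite _)
      rw [hbig] at this
      omega
end
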